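/- arXiv:1306.1720 — 3 statements merged into one kernel-verified Lean document; each statement's English description precedes it below -/
import Mathlib

section
/- If F̄ : (0,∞) → (0,∞) is nonincreasing and regularly varying at infinity with index −β for some β > 1, then ∫_u^∞ F̄(y) dy ~ u·F̄(u)/(β−1) as u → ∞, and consequently F̄(u)/ (the integrated tail ∫_u^∞ F̄(y)dy) ~ (β−1)/u. -/
open Filter MeasureTheory Set

/-! The substitution `y = t u` turns `(∫_u^∞ F) / (u F(u))` into `∫_1^∞ F(t u) / F(u) dt`, whose
integrand tends to `t^(-β)`. Fixing `1 < γ < β`, eventually `F(2u) ≤ 2^(-γ) F(u)`; iterating this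
and using monotonicity gives Potter's bound `F(t u) ≤ 2^γ t^(-γ) F(u)` for `t ≥ 1`, an integrable
majorant. Dominated convergence then yields the limit `∫_1^∞ t^(-β) dt = 1/(β-1)`. -/

section Karamata

variable {F : ℝ → ℝ}

lemma le_pow_mul_of_le_mul {r c u₀ : ℝ} (hr : 1 ≤ r) (hc : 0 ≤ c) (hu₀ : 0 < u₀)
    (hstep : ∀ v, u₀ ≤ v → F (r * v) ≤ c * F v) {u : ℝ} (hu : u₀ ≤ u) (k : ℕ) :
    F (r ^ k * u) ≤ c ^ k * F u := by
  induction k with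
  | zero => simp
  | succ k ih =>
    have hk : u₀ ≤ r ^ k * u :=
      hu.trans (le_mul_of_one_le_left (hu₀.trans_le hu).le (one_le_pow₀ hr))
    calc F (r ^ (k + 1) * u) = F (r * (r ^ k * u)) := by ring_nf
      _ ≤ c * F (r ^ k * u) := hstep _ hk
      _ ≤ c * (c ^ k * F u) := mul_le_mul_of_nonneg_left ih hc
      _ = c ^ (k + 1) * F u := by ring

/-- Potter's bound; the factor `r ^ γ` pays for rounding `t` down to a power of `r`. -/
lemma le_rpow_mul_of_le_rpow_mul {r γ u₀ : ℝ} (hr : 1 < r) (hγ : 0 ≤ γ) (hu₀ : 0 < u₀)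
    (hanti : AntitoneOn F (Ioi 0)) (hstep : ∀ v, u₀ ≤ v → F (r * v) ≤ r ^ (-γ) * F v)
    {u t : ℝ} (hu : u₀ ≤ u) (hFu : 0 ≤ F u) (ht : 1 ≤ t) :
    F (t * u) ≤ r ^ γ * t ^ (-γ) * F u := by
  have hu0 : 0 < u := hu₀.trans_le hu
  obtain ⟨k, hkt, htk⟩ := exists_nat_pow_near ht hr
  have hrk : 0 < r ^ k := by positivity
  have hpow : (r ^ (-γ)) ^ k ≤ r ^ γ * t ^ (-γ) :=
    calc (r ^ (-γ)) ^ k = r ^ γ * (r ^ k * r) ^ (-γ) := by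
          rw [Real.rpow_pow_comm (by positivity), Real.mul_rpow hrk.le (by positivity),
            mul_left_comm, ← Real.rpow_add (by positivity), add_neg_cancel, Real.rpow_zero,
            mul_one]
      _ ≤ r ^ γ * t ^ (-γ) := by
          refine mul_le_mul_of_nonneg_left ?_ (by positivity)
          exact Real.rpow_le_rpow_of_nonpos (by linarith) (by rw [← pow_succ]; exact htk.le)
            (by linarith)
  calc F (t * u) ≤ F (r ^ k * u) :=
        hanti (mem_Ioi.2 (by positivity)) (mem_Ioi.2 (by positivity))
          (mul_le_mul_of_nonneg_right hkt hu0.le)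
    _ ≤ (r ^ (-γ)) ^ k * F u :=
        le_pow_mul_of_le_mul hr.le (by positivity) hu₀ hstep hu k
    _ ≤ r ^ γ * t ^ (-γ) * F u := mul_le_mul_of_nonneg_right hpow hFu

lemma eventually_le_rpow_mul {β γ : ℝ} (hγβ : γ < β) (hγ : 0 ≤ γ) (hpos : ∀ u > 0, 0 < F u)
    (hanti : AntitoneOn F (Ioi 0))
    (hRV : Tendsto (fun u => F (2 * u) / F u) atTop (nhds (2 ^ (-β)))) :
    ∀ᶠ u in atTop, ∀ t, 1 ≤ t → F (t * u) ≤ 2 ^ γ * t ^ (-γ) * F u := by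
  have hlt : (2 : ℝ) ^ (-β) < 2 ^ (-γ) :=
    Real.rpow_lt_rpow_of_exponent_lt one_lt_two (neg_lt_neg hγβ)
  obtain ⟨u₀, hu₀⟩ := eventually_atTop.1 <|
    (hRV.eventually (gt_mem_nhds hlt)).and (eventually_gt_atTop 0)
  have hstep : ∀ v, u₀ ≤ v → F (2 * v) ≤ 2 ^ (-γ) * F v := fun v hv =>
    ((div_lt_iff₀ (hpos v (hu₀ v hv).2)).1 (hu₀ v hv).1).le
  filter_upwards [eventually_ge_atTop u₀] with u hu t ht
  exact le_rpow_mul_of_le_rpow_mul one_lt_two hγ (hu₀ u₀ le_rfl).2 hanti hstep hu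
    (hpos u (hu₀ u hu).2).le ht

lemma integral_Ioi_div_eq_integral_Ioi_one {u : ℝ} (hu : 0 < u) :
    (∫ y in Ioi u, F y) / (u * F u) = ∫ t in Ioi 1, F (t * u) / F u := by
  rw [integral_div, integral_comp_mul_right_Ioi F 1 hu, one_mul, smul_eq_mul]
  field_simp

theorem tendsto_integral_Ioi_one_of_regularlyVarying {β : ℝ} (hβ : 1 < β)
    (hpos : ∀ u > 0, 0 < F u) (hanti : AntitoneOn F (Ioi 0))
    (hint : ∀ u > 0, IntegrableOn F (Ioi u))
    (hRV : ∀ l > 0, Tendsto (fun u => F (l * u) / F u) atTop (nhds (l ^ (-β)))) :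
    Tendsto (fun u => ∫ t in Ioi 1, F (t * u) / F u) atTop (nhds (β - 1)⁻¹) := by
  obtain ⟨γ, hγ, hγβ⟩ := exists_between hβ
  have hlim : ∫ t in Ioi 1, t ^ (-β) = (β - 1)⁻¹ := by
    rw [integral_Ioi_rpow_of_lt (by linarith) one_pos, Real.one_rpow,
      show -β + 1 = -(β - 1) by ring, neg_div_neg_eq, one_div]
  rw [← hlim]
  refine tendsto_integral_filter_of_dominated_convergence (fun t => 2 ^ γ * t ^ (-γ)) ?_ ?_ ?_ ?_
  · filter_upwards [eventually_gt_atTop 0] with u hu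
    exact (((integrableOn_Ioi_comp_mul_right_iff F 1 hu).2
      (by simpa using hint u hu)).div_const _).aestronglyMeasurable
  · filter_upwards [eventually_le_rpow_mul hγβ (by linarith) hpos hanti
      (hRV 2 two_pos), eventually_gt_atTop 0] with u hbound hu
    filter_upwards [ae_restrict_mem measurableSet_Ioi] with t ht
    have hFu := hpos u hu
    rw [Real.norm_eq_abs, abs_of_pos (div_pos (hpos _ (by positivity [mem_Ioi.1 ht])) hFu),
      div_le_iff₀ hFu]
    exact hbound t (mem_Ioi.1 ht).le
  · exact (integrableOn_Ioi_rpow_of_lt (by linarith) one_pos).const_mul _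
  · filter_upwards [ae_restrict_mem measurableSet_Ioi] with t ht
    exact hRV t (one_pos.trans ht)

end Karamata

/-- Karamata: F̄ ∈ RV(−β), β > 1 ⟹ ∫_u^∞ F̄ ~ u F̄(u)/(β−1). -/
theorem stmt_9 (Fb : ℝ → ℝ) (β : ℝ) (hβ : 1 < β)
    (hpos : ∀ u > 0, 0 < Fb u)
    (hanti : ∀ u v : ℝ, 0 < u → u ≤ v → Fb v ≤ Fb u)
    (hint : ∀ u > 0, IntegrableOn Fb (Set.Ioi u))
    (hRV : ∀ l > 0, Tendsto (fun u => Fb (l * u) / Fb u) atTop (nhds (l ^ (-β)))) :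
    Tendsto (fun u => (∫ y in Set.Ioi u, Fb y) / (u * Fb u / (β - 1))) atTop (nhds 1) ∧
    Tendsto (fun u => u * (Fb u / ∫ y in Set.Ioi u, Fb y)) atTop (nhds (β - 1)) := by
  have hβ0 : β - 1 ≠ 0 := by linarith
  have hG : Tendsto (fun u => (∫ y in Ioi u, Fb y) / (u * Fb u)) atTop (nhds (β - 1)⁻¹) :=
    (tendsto_integral_Ioi_one_of_regularlyVarying hβ hpos
      (fun u hu v _ huv => hanti u v hu huv) hint hRV).congr'
      (by filter_upwards [eventually_gt_atTop 0] with u hu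
          exact (integral_Ioi_div_eq_integral_Ioi_one hu).symm)
  constructor
  · simpa only [div_div_eq_mul_div, div_mul_eq_mul_div, inv_mul_cancel₀ hβ0]
      using hG.mul_const (β - 1)
  · simpa only [inv_div, mul_div_assoc, inv_inv] using hG.inv₀ (inv_ne_zero hβ0)
end

section
/- Let Π̄_{H*} : (0,∞) → [0,∞) be nonincreasing and Π_𝓗 a measure on (0,∞) with finite tail Π̄_𝓗(x) = Π_𝓗((x,∞)) for x > 0 and ∫_{(0,1]} y Π_𝓗(dy) < ∞. Define A(x) = ∫₀ˣ Π̄_{H*}(u) du and I(x) = ∫_{(0,∞)} Π_𝓗(dy) ∫₁ˣ (Π̄_{H*}(u) − Π̄_{H*}(y+u)) du. If A(∞) = ∞, then I(x)/A(x) → 0 as x → ∞. -/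
/-!
Write `g_x(y) = ∫₁ˣ (Π̄(u) - Π̄(y + u)) du`. Since `Π̄` is nonincreasing and nonnegative,
`g_x(y) = ∫₁^{1+y} Π̄ - ∫ₓ^{x+y} Π̄ ≤ y Π̄(1)` and `g_x(y) ≤ ∫₁ˣ Π̄ ≤ A(x)`. Splitting the
`Π_𝓗`-integral at a level `K` gives `I(x) ≤ Π̄(1) ∫_{(0,K]} y Π_𝓗(dy) + Π̄_𝓗(K) A(x)`, so
`limsup I/A ≤ Π̄_𝓗(K)` for every `K`, and `Π̄_𝓗(K) → 0`.
-/

open Filter MeasureTheory Set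

section ShiftedDifference

variable {f : ℝ → ℝ} {a b y : ℝ}

lemma AntitoneOn.intervalIntegrable_of_pos (hf : AntitoneOn f (Ioi 0)) (ha : 0 < a)
    (hb : 0 < b) : IntervalIntegrable f volume a b :=
  (hf.mono fun _ hu => (lt_min ha hb).trans_le hu.1).intervalIntegrable

lemma AntitoneOn.const_add_Ioi (hf : AntitoneOn f (Ioi 0)) (hy : 0 ≤ y) :
    AntitoneOn (fun u => f (y + u)) (Ioi 0) := fun u hu v hv huv =>
  hf (show 0 < y + u by linarith [mem_Ioi.1 hu]) (show 0 < y + v by linarith [mem_Ioi.1 hv])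
    (by linarith)

lemma integral_sub_comp_const_add (hf : AntitoneOn f (Ioi 0)) (ha : 0 < a) (hb : 0 < b)
    (hy : 0 ≤ y) :
    ∫ u in a..b, (f u - f (y + u)) = (∫ u in a..b, f u) - ∫ u in y + a..y + b, f u := by
  rw [intervalIntegral.integral_sub (hf.intervalIntegrable_of_pos ha hb)
    ((hf.const_add_Ioi hy).intervalIntegrable_of_pos ha hb),
    intervalIntegral.integral_comp_add_left]

lemma integral_sub_comp_const_add_eq_sub (hf : AntitoneOn f (Ioi 0)) (ha : 0 < a) (hb : 0 < b)
    (hy : 0 ≤ y) :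
    ∫ u in a..b, (f u - f (y + u)) = (∫ u in a..y + a, f u) - ∫ u in b..y + b, f u := by
  rw [integral_sub_comp_const_add hf ha hb hy,
    intervalIntegral.integral_interval_sub_interval_comm (hf.intervalIntegrable_of_pos ha hb)
      (hf.intervalIntegrable_of_pos (by linarith) (by linarith))
      (hf.intervalIntegrable_of_pos ha (by linarith))]

lemma integral_sub_comp_const_add_nonneg (hf : AntitoneOn f (Ioi 0)) (ha : 0 < a) (hab : a ≤ b)
    (hy : 0 ≤ y) : 0 ≤ ∫ u in a..b, (f u - f (y + u)) :=
  intervalIntegral.integral_nonneg hab fun u hu => sub_nonneg.2 <|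
    hf (show 0 < u by linarith [hu.1]) (show 0 < y + u by linarith [hu.1]) (by linarith)

variable (hf : AntitoneOn f (Ioi 0)) (hf0 : ∀ u, 0 < u → 0 ≤ f u)
include hf hf0

lemma integral_sub_comp_const_add_le_mul (ha : 0 < a) (hb : 0 < b) (hy : 0 ≤ y) :
    ∫ u in a..b, (f u - f (y + u)) ≤ f a * y := by
  have hhead : ∫ u in a..y + a, f u ≤ f a * y := by
    calc ∫ u in a..y + a, f u ≤ ∫ _ in a..y + a, f a :=
          intervalIntegral.integral_mono_on (by linarith)
            (hf.intervalIntegrable_of_pos ha (by linarith)) intervalIntegrable_const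
            fun u hu => hf ha (ha.trans_le hu.1) hu.1
      _ = f a * y := by simp [mul_comm]
  have htail : 0 ≤ ∫ u in b..y + b, f u :=
    intervalIntegral.integral_nonneg (by linarith) fun u hu => hf0 u (by linarith [hu.1])
  rw [integral_sub_comp_const_add_eq_sub hf ha hb hy]
  linarith

lemma integral_sub_comp_const_add_le_integral (ha : 0 < a) (hab : a ≤ b) (hy : 0 ≤ y) :
    ∫ u in a..b, (f u - f (y + u)) ≤ ∫ u in a..b, f u := by
  have hshift : 0 ≤ ∫ u in y + a..y + b, f u :=
    intervalIntegral.integral_nonneg (by linarith) fun u hu => hf0 u (by linarith [hu.1])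
  rw [integral_sub_comp_const_add hf ha (by linarith) hy]
  linarith

end ShiftedDifference

lemma setIntegral_Ioi_le_of_le_mul_of_le {μ : Measure ℝ} {g : ℝ → ℝ} {c B K : ℝ} (hK : 0 ≤ K)
    (hg0 : ∀ y, 0 < y → 0 ≤ g y) (hgc : ∀ y, 0 < y → g y ≤ c * y) (hgB : ∀ y, 0 < y → g y ≤ B)
    (hmom : IntegrableOn (fun y => y) (Ioc 0 K) μ) (htail : μ (Ioi K) ≠ ⊤) :
    ∫ y in Ioi 0, g y ∂μ ≤ c * ∫ y in Ioc 0 K, y ∂μ + (μ (Ioi K)).toReal * B := by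
  have hlow : (μ.restrict (Ioi 0)).restrict (Ioc 0 K) = μ.restrict (Ioc 0 K) := by
    rw [Measure.restrict_restrict measurableSet_Ioc, inter_eq_left.2 Ioc_subset_Ioi_self]
  have hhigh : (μ.restrict (Ioi 0)).restrict (Ioi K) = μ.restrict (Ioi K) := by
    rw [Measure.restrict_restrict measurableSet_Ioi, inter_eq_left.2 (Ioi_subset_Ioi hK)]
  have hint_low : Integrable ((Ioc 0 K).indicator fun y => c * y) (μ.restrict (Ioi 0)) := by
    rw [integrable_indicator_iff measurableSet_Ioc, IntegrableOn, hlow]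
    exact hmom.const_mul c
  have hint_high : Integrable ((Ioi K).indicator fun _ => B) (μ.restrict (Ioi 0)) := by
    rw [integrable_indicator_iff measurableSet_Ioi, IntegrableOn, hhigh]
    exact integrableOn_const htail
  calc ∫ y in Ioi 0, g y ∂μ
      ≤ ∫ y in Ioi 0, ((Ioc 0 K).indicator (fun y => c * y) y +
          (Ioi K).indicator (fun _ => B) y) ∂μ := by
        refine integral_mono_of_nonneg ?_ (hint_low.add hint_high) ?_ <;>
          filter_upwards [ae_restrict_mem measurableSet_Ioi] with y (hy : 0 < y)
        · exact hg0 y hy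
        · rcases le_or_gt y K with hyK | hyK
          · simpa [indicator_of_mem (show y ∈ Ioc 0 K from ⟨hy, hyK⟩),
              indicator_of_notMem (show y ∉ Ioi K from not_lt.2 hyK)] using hgc y hy
          · simpa [indicator_of_notMem (show y ∉ Ioc 0 K from fun h => hyK.not_ge h.2),
              indicator_of_mem (show y ∈ Ioi K from hyK)] using hgB y hy
    _ = c * ∫ y in Ioc 0 K, y ∂μ + (μ (Ioi K)).toReal * B := by
        rw [integral_add hint_low hint_high, integral_indicator measurableSet_Ioc,
          integral_indicator measurableSet_Ioi, hlow, hhigh, integral_const_mul, setIntegral_const,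
          smul_eq_mul, measureReal_def]

lemma tendsto_div_zero_of_le_const_add_mul {α : Type*} {l : Filter α} {I A : α → ℝ} {T : ℝ → ℝ}
    (hA : Tendsto A l atTop) (hT : Tendsto T atTop (nhds 0)) (hI0 : ∀ᶠ x in l, 0 ≤ I x)
    (hle : ∀ᶠ K in atTop, ∃ C, ∀ᶠ x in l, I x ≤ C + T K * A x) :
    Tendsto (fun x => I x / A x) l (nhds 0) := by
  rw [tendsto_order]
  refine ⟨fun a ha => ?_, fun ε hε => ?_⟩
  · filter_upwards [hI0, hA.eventually_gt_atTop 0] with x hIx hAx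
    exact ha.trans_le (div_nonneg hIx hAx.le)
  · obtain ⟨K, hTK, C, hC⟩ := ((hT.eventually (gt_mem_nhds (half_pos hε))).and hle).exists
    have hCA : ∀ᶠ x in l, C / A x < ε / 2 :=
      (tendsto_const_nhds.div_atTop hA).eventually (gt_mem_nhds (half_pos hε))
    filter_upwards [hC, hCA, hA.eventually_gt_atTop 0] with x hIx hCx hAx
    calc I x / A x ≤ (C + T K * A x) / A x := div_le_div_of_nonneg_right hIx hAx.le
      _ = C / A x + T K := by field_simp
      _ < ε := by linarith

/-- I(x)/A(x) → 0 when A(∞) = ∞. -/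
theorem stmt_14 (Pib : ℝ → ℝ) (PiH : Measure ℝ)
    (hnonneg : ∀ x > 0, 0 ≤ Pib x)
    (hanti : ∀ x y : ℝ, 0 < x → x ≤ y → Pib y ≤ Pib x)
    (hint : ∀ x > 0, IntervalIntegrable Pib volume 0 x)
    (A : ℝ → ℝ) (hA : ∀ x, A x = ∫ u in (0:ℝ)..x, Pib u)
    (hAinf : Tendsto A atTop atTop)
    (htailfin : ∀ K > 0, PiH (Set.Ioi K) < ⊤)
    (htail : Tendsto (fun K => (PiH (Set.Ioi K)).toReal) atTop (nhds 0))
    (hmom : ∀ K > 0, IntegrableOn (fun y => y) (Set.Ioc (0:ℝ) K) PiH)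
    (I : ℝ → ℝ)
    (hI : ∀ x, I x = ∫ y in Set.Ioi (0:ℝ),
      (∫ u in (1:ℝ)..x, (Pib u - Pib (y + u))) ∂PiH) :
    Tendsto (fun x => I x / A x) atTop (nhds 0) := by
  have hf : AntitoneOn Pib (Ioi 0) := fun u hu _ _ huv => hanti u _ hu huv
  have hA_ge : ∀ x, 1 ≤ x → ∫ u in (1:ℝ)..x, Pib u ≤ A x := fun x hx =>
    (hA x).symm ▸ intervalIntegral.integral_mono_interval zero_le_one hx le_rfl
      (ae_restrict_of_forall_mem measurableSet_Ioc fun u hu => hnonneg u hu.1)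
      (hint x (by linarith))
  refine tendsto_div_zero_of_le_const_add_mul hAinf htail ?_ ?_
  · filter_upwards [eventually_ge_atTop 1] with x hx
    rw [hI]
    exact setIntegral_nonneg measurableSet_Ioi fun y hy =>
      integral_sub_comp_const_add_nonneg hf one_pos hx hy.le
  · filter_upwards [eventually_gt_atTop 0] with K hK
    refine ⟨Pib 1 * ∫ y in Ioc 0 K, y ∂PiH, ?_⟩
    filter_upwards [eventually_ge_atTop 1] with x hx
    rw [hI]
    exact setIntegral_Ioi_le_of_le_mul_of_le hK.le
      (fun y hy => integral_sub_comp_const_add_nonneg hf one_pos hx hy.le)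
      (fun y hy => integral_sub_comp_const_add_le_mul hf hnonneg one_pos (by linarith) hy.le)
      (fun y hy => (integral_sub_comp_const_add_le_integral hf hnonneg one_pos hx hy.le).trans
        (hA_ge x hx))
      (hmom K hK) (htailfin K hK).ne
end

section
/- For two Lévy tails Π̄₁, Π̄₂ : (0,∞) → (0,∞), nonincreasing, suppose Π̄₁ ∈ 𝓛 (long-tailed: Π̄₁(u+x)/Π̄₁(u) → 1 for each fixed x) and G : [0,∞) → [0,∞) is a nondecreasing unbounded function (a renewal measure) with Π̄₂(u) = ∫_{(0,∞)} Π̄₁(y+u) G(dy). Then Π̄₂(u)/Π̄₁(u) → ∞ as u → ∞. -/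
open Filter MeasureTheory Set Topology

/-! A renewal measure `G` of infinite mass gives mass at least `c` to some `(0, a]`, for any `c`.
On that interval `Π̄₁(y + u) ≥ Π̄₁(u + a)`, so `Π̄₂(u) ≥ c · Π̄₁(u + a)`, and long-tailedness makes
`Π̄₁(u + a) ≥ Π̄₁(u) / 2` for large `u`. Hence `Π̄₂(u) / Π̄₁(u) ≥ c / 2` eventually. The mass of
`(0, a]` is finite because `y ↦ Π̄₁(y + 1)` is integrable and bounded below on it by `Π̄₁(a + 1) > 0`. -/

theorem tendsto_measure_Ioc_atTop {α : Type*} [MeasurableSpace α] [Preorder α]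
    [(atTop : Filter α).IsCountablyGenerated] (μ : Measure α) (a : α) :
    Tendsto (fun x => μ (Ioc a x)) atTop (𝓝 (μ (Ioi a))) := by
  rw [← iUnion_Ioc_right]
  exact tendsto_measure_iUnion_atTop (antitone_const.Ioc monotone_id)

theorem tendsto_measureReal_Ioc_atTop_of_measure_Ioi_eq_top {μ : Measure ℝ} {a : ℝ}
    (htop : μ (Ioi a) = ⊤) (hfin : ∀ᶠ x in atTop, μ (Ioc a x) ≠ ⊤) :
    Tendsto (fun x => μ.real (Ioc a x)) atTop atTop := by
  refine tendsto_atTop.2 fun M => ?_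
  have hlt : ∀ᶠ x in atTop, ENNReal.ofReal M < μ (Ioc a x) :=
    (htop ▸ tendsto_measure_Ioc_atTop μ a).eventually
      (eventually_gt_nhds ENNReal.ofReal_lt_top)
  filter_upwards [hlt, hfin] with x hx hxfin
  exact (ENNReal.ofReal_le_iff_le_toReal hxfin).1 hx.le

theorem MeasureTheory.IntegrableOn.measure_lt_top_of_le {α : Type*} [MeasurableSpace α] {μ : Measure α}
    {f : α → ℝ} {s t : Set α} {ε : ℝ} (hf : IntegrableOn f s μ) (hts : t ⊆ s) (hε : 0 < ε)
    (hεf : ∀ x ∈ t, ε ≤ f x) : μ t < ⊤ :=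
  calc μ t ≤ μ ({x | ε ≤ ‖f x‖} ∩ s) :=
        measure_mono fun x hx => ⟨(hεf x hx).trans (Real.le_norm_self _), hts hx⟩
    _ ≤ μ.restrict s {x | ε ≤ ‖f x‖} := Measure.le_restrict_apply _ _
    _ < ⊤ := hf.measure_norm_ge_lt_top hε

section ShiftedIntegral

variable {f : ℝ → ℝ} {μ : Measure ℝ}

theorem measure_Ioc_ne_top_of_integrableOn_shift (hpos : ∀ x > 0, 0 < f x)
    (hanti : AntitoneOn f (Ioi 0)) {u : ℝ} (hu : 0 < u)
    (hint : IntegrableOn (fun y => f (y + u)) (Ioi 0) μ) {a : ℝ} (ha : 0 < a) :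
    μ (Ioc 0 a) ≠ ⊤ := by
  refine (hint.measure_lt_top_of_le Ioc_subset_Ioi_self (hpos (a + u) (by positivity)) ?_).ne
  intro y ⟨hy0, hya⟩
  exact hanti (show 0 < y + u by linarith) (show 0 < a + u by linarith) (by linarith)

theorem mul_measureReal_Ioc_le_integral_shift (hpos : ∀ x > 0, 0 < f x)
    (hanti : AntitoneOn f (Ioi 0)) {u : ℝ} (hu : 0 < u)
    (hint : IntegrableOn (fun y => f (y + u)) (Ioi 0) μ) {a : ℝ} (ha : 0 < a) :
    f (a + u) * μ.real (Ioc 0 a) ≤ ∫ y in Ioi 0, f (y + u) ∂μ := by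
  have hle_on : ∀ y ∈ Ioc (0 : ℝ) a, f (a + u) ≤ f (y + u) := fun y ⟨hy0, hya⟩ =>
    hanti (show 0 < y + u by linarith) (show 0 < a + u by linarith) (by linarith)
  have hnonneg : 0 ≤ᵐ[μ.restrict (Ioi 0)] fun y => f (y + u) := by
    filter_upwards [ae_restrict_mem measurableSet_Ioi] with y (hy : 0 < y)
    exact (hpos _ (by linarith)).le
  calc f (a + u) * μ.real (Ioc 0 a) ≤ ∫ y in Ioc 0 a, f (y + u) ∂μ :=
        setIntegral_ge_of_const_le_real measurableSet_Ioc
          (measure_Ioc_ne_top_of_integrableOn_shift hpos hanti hu hint ha) hle_on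
          (hint.mono_set Ioc_subset_Ioi_self)
    _ ≤ ∫ y in Ioi 0, f (y + u) ∂μ :=
        setIntegral_mono_set hint hnonneg Ioc_subset_Ioi_self.eventuallyLE

end ShiftedIntegral

/-- if Π̄₁ ∈ 𝓛 and G is an infinite renewal measure, then
Π̄₂(u) = ∫ Π̄₁(y+u) G(dy) satisfies Π̄₂(u)/Π̄₁(u) → ∞. -/
theorem stmt_15 (Pi1 : ℝ → ℝ) (G : Measure ℝ)
    (hpos : ∀ u > 0, 0 < Pi1 u)
    (hanti : ∀ u v : ℝ, 0 < u → u ≤ v → Pi1 v ≤ Pi1 u)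
    (hL : ∀ x : ℝ, Tendsto (fun u => Pi1 (u + x) / Pi1 u) atTop (nhds 1))
    (hG : G (Set.Ioi (0:ℝ)) = ⊤)
    (hint : ∀ u > 0, IntegrableOn (fun y => Pi1 (y + u)) (Set.Ioi (0:ℝ)) G) :
    Tendsto (fun u => (∫ y in Set.Ioi (0:ℝ), Pi1 (y + u) ∂G) / Pi1 u) atTop atTop := by
  have hanti' : AntitoneOn Pi1 (Ioi 0) := fun u hu _ _ huv => hanti u _ hu huv
  refine tendsto_atTop.2 fun M => ?_
  have hmass : Tendsto (fun a => G.real (Ioc 0 a)) atTop atTop :=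
    tendsto_measureReal_Ioc_atTop_of_measure_Ioi_eq_top hG <|
      (eventually_gt_atTop 0).mono fun a ha =>
        measure_Ioc_ne_top_of_integrableOn_shift hpos hanti' one_pos (hint 1 one_pos) ha
  obtain ⟨a, ha, hMa⟩ :=
    ((eventually_gt_atTop 0).and (hmass.eventually_ge_atTop (2 * M))).exists
  have hhalf : ∀ᶠ u in atTop, (1 / 2 : ℝ) < Pi1 (u + a) / Pi1 u :=
    (hL a).eventually (eventually_gt_nhds (by norm_num))
  filter_upwards [hhalf, eventually_gt_atTop 0] with u hhalf hu
  have hPu := hpos u hu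
  rw [lt_div_iff₀ hPu] at hhalf
  have hbound := mul_measureReal_Ioc_le_integral_shift hpos hanti' hu (hint u hu) ha
  rw [add_comm a u] at hbound
  rw [le_div_iff₀ hPu]
  nlinarith [measureReal_nonneg (μ := G) (s := Ioc 0 a)]
end
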